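/- Let T be a unitary (translation) with Tψ₀ = zψ₀ for |z| = 1, and let each q_j (j = 1..N) be a commuting family of Hermitian operators with integer spectra satisfying T q_j T^{-1} = q_{j−1} (indices mod N), Q = Σ_j q_j, and Qψ₀ = Nρ ψ₀. Define U := Π_j exp(2πi (j/N) q_j) and ψ_LSM := U ψ₀. Then T ψ_LSM = z e^{2πiρ} ψ_LSM. -/

import Mathlib

/-!
Since the `q j` commute, `U = exp X` with `X = ∑ j, 2πi (j+1)/N • q j`. Conjugating by `T` shifts
`q j` to `q (j - 1)`, so `T X T⁻¹` has the coefficients shifted by one site: it equals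
`X + (2πi/N) Q - 2πi q_N`. The last term exponentiates to `1` because `q_N` has integer spectrum,
so `T U T⁻¹ = U exp(2πi Q / N)`, and `exp(2πi Q / N)` acts on `ψ₀` as `e^{2πiρ}`.
-/

open Complex Real

theorem IsSelfAdjoint.exp_two_pi_I_smul_eq_one {A : Type*} [CStarAlgebra A] {a : A}
    (ha : IsSelfAdjoint a) (hint : spectrum ℂ a ⊆ Set.range ((↑) : ℤ → ℂ)) :
    NormedSpace.exp ((2 * π * I) • a) = 1 := by
  have := ha.isStarNormal
  rw [← CFC.complex_exp_eq_normedSpace_exp, ← cfc_comp_smul _ _ a, ← cfc_const_one ℂ a]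
  refine cfc_congr fun x hx => ?_
  obtain ⟨n, rfl⟩ := hint hx
  simpa [mul_comm] using exp_int_mul_two_pi_mul_I n

theorem ContinuousLinearMap.exp_apply_of_apply_eq_smul {V : Type*} [NormedAddCommGroup V]
    [NormedSpace ℂ V] [CompleteSpace V] {A : V →L[ℂ] V} {v : V} {μ : ℂ} (h : A v = μ • v) :
    NormedSpace.exp A v = exp μ • v := by
  have hpow : ∀ n : ℕ, (A ^ n) v = μ ^ n • v := by
    intro n
    induction n with
    | zero => simp
    | succ n ih => rw [pow_succ', mul_apply_eq_comp, ih, map_smul, h, smul_smul, pow_succ]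
  have hA := (NormedSpace.exp_series_hasSum_exp' (𝕂 := ℂ) A).mapL (apply ℂ V v)
  have hμ := (NormedSpace.exp_series_hasSum_exp' (𝕂 := ℂ) μ).smul_const v
  rw [← exp_eq_exp_ℂ] at hμ
  refine hA.unique ?_
  convert hμ using 2 with n
  simp [hpow, smul_smul]

noncomputable def twistPhase (N : ℕ) (j : Fin N) : ℂ := 2 * π * I * ((j.val + 1 : ℕ) : ℂ) / N

theorem twistPhase_add_one {N : ℕ} [NeZero N] (k : Fin N) :
    twistPhase N (k + 1) + (if k = -1 then 2 * π * I else 0) = twistPhase N k + 2 * π * I / N := by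
  obtain ⟨n, rfl⟩ := Nat.exists_eq_succ_of_ne_zero (NeZero.ne N)
  have hN : (n + 1 : ℂ) ≠ 0 := Nat.cast_add_one_ne_zero n
  have hlast : (-1 : Fin (n + 1)) = Fin.last n := Fin.ext (by simp)
  unfold twistPhase
  rw [Fin.val_add_one, hlast]
  split_ifs with h
  · subst h
    field_simp
    push_cast
    ring
  · field_simp
    push_cast
    ring

theorem sum_twistPhase_add_one_smul {N : ℕ} [NeZero N] {M : Type*} [AddCommGroup M] [Module ℂ M]
    (x : Fin N → M) :
    ∑ k, twistPhase N (k + 1) • x k + (2 * π * I) • x (-1) =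
      ∑ k, twistPhase N k • x k + (2 * π * I / N) • ∑ k, x k := by
  rw [← Fintype.sum_ite_eq' (-1 : Fin N) fun k => (2 * π * I) • x k, Finset.smul_sum,
    ← Finset.sum_add_distrib, ← Finset.sum_add_distrib]
  refine Finset.sum_congr rfl fun k _ => ?_
  rw [← add_smul, ← twistPhase_add_one, add_smul, ite_smul, zero_smul]

section BanachAlgebra

variable {𝔸 : Type*} [NormedRing 𝔸] [NormedAlgebra ℂ 𝔸] [CompleteSpace 𝔸]

open NormedSpace

theorem noncommProd_exp_smul_eq_exp_sum {ι : Type*} (s : Finset ι) (c : ι → ℂ) (q : ι → 𝔸)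
    (hq : ∀ i j, Commute (q i) (q j)) :
    s.noncommProd (fun j => exp (c j • q j))
        (fun j _ k _ _ => (((hq j k).smul_left _).smul_right _).exp) =
      exp (∑ j ∈ s, c j • q j) := by
  let : NormedAlgebra ℚ 𝔸 := .restrictScalars ℚ ℂ 𝔸
  exact (exp_sum_of_commute s _ fun j _ k _ _ => ((hq j k).smul_left _).smul_right _).symm

theorem units_conj_exp_sum_twistPhase_smul {N : ℕ} [NeZero N] (u : 𝔸ˣ) (q : Fin N → 𝔸)
    (hq : ∀ j k, Commute (q j) (q k)) (hper : ∀ j, exp ((2 * π * I) • q j) = 1)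
    (hu : ∀ j, u * q j * ↑u⁻¹ = q (j - 1)) :
    u * exp (∑ j, twistPhase N j • q j) * ↑u⁻¹ =
      exp (∑ j, twistPhase N j • q j) * exp ((2 * π * I / N) • ∑ j, q j) := by
  let : NormedAlgebra ℚ 𝔸 := .restrictScalars ℚ ℂ 𝔸
  have hcomm : ∀ (a : Fin N → ℂ) (k : Fin N), Commute (∑ j, a j • q j) (q k) := fun a k =>
    Commute.sum_left _ _ _ fun j _ => (hq j k).smul_left _
  calc u * exp (∑ j, twistPhase N j • q j) * ↑u⁻¹
      = exp (∑ j, twistPhase N j • q (j - 1)) := by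
        simp [← exp_units_conj, Finset.mul_sum, Finset.sum_mul, hu]
    _ = exp (∑ k, twistPhase N (k + 1) • q k) := by
        rw [← Equiv.sum_comp (Equiv.addRight 1)]
        simp
    _ = exp (∑ k, twistPhase N (k + 1) • q k + (2 * π * I) • q (-1)) := by
        rw [exp_add_of_commute, hper, mul_one]
        exact (hcomm _ _).smul_right _
    _ = exp (∑ j, twistPhase N j • q j) * exp ((2 * π * I / N) • ∑ j, q j) := by
        rw [sum_twistPhase_add_one_smul, exp_add_of_commute]
        exact (Commute.sum_right _ _ _ fun k _ => hcomm _ k).smul_right _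

end BanachAlgebra

theorem lsm_twist_eigenvalue_general {V : Type*} [NormedAddCommGroup V]
    [InnerProductSpace ℂ V] [FiniteDimensional ℂ V] (N : ℕ) [NeZero N]
    (T Tinv : V →L[ℂ] V) (hT1 : T ∘L Tinv = 1) (hT2 : Tinv ∘L T = 1)
    (q : Fin N → (V →L[ℂ] V))
    (hqherm : ∀ j, IsSelfAdjoint (q j))
    (hqint : ∀ j, spectrum ℂ (q j) ⊆ Set.range ((↑) : ℤ → ℂ))
    (hqcomm : ∀ j k, Commute (q j) (q k))
    (hTq : ∀ j : Fin N, T ∘L q j ∘L Tinv = q (j - 1))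
    (ψ₀ : V) (z : ℂ) (hTψ : T ψ₀ = z • ψ₀)
    (ρ : ℝ) (hQψ : (∑ j, q j) ψ₀ = ((N * ρ : ℝ) : ℂ) • ψ₀) :
    T ((Finset.univ.noncommProd
          (fun j : Fin N =>
            NormedSpace.exp ((2 * Real.pi * Complex.I * ((j.val + 1 : ℕ) : ℂ) / N) • q j))
          (fun j _ k _ _ =>
            (((hqcomm j k).smul_left _).smul_right _).exp)) ψ₀) =
      (z * Complex.exp (2 * Real.pi * Complex.I * ρ)) •
        ((Finset.univ.noncommProd
          (fun j : Fin N =>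
            NormedSpace.exp ((2 * Real.pi * Complex.I * ((j.val + 1 : ℕ) : ℂ) / N) • q j))
          (fun j _ k _ _ =>
            (((hqcomm j k).smul_left _).smul_right _).exp)) ψ₀) := by
  suffices h : T (NormedSpace.exp (∑ j, twistPhase N j • q j) ψ₀) =
      (z * exp (2 * π * I * ρ)) • NormedSpace.exp (∑ j, twistPhase N j • q j) ψ₀ by
    rwa [← noncommProd_exp_smul_eq_exp_sum _ _ _ hqcomm] at h
  set U := NormedSpace.exp (∑ j, twistPhase N j • q j)
  set P := NormedSpace.exp ((2 * π * I / N) • ∑ j, q j)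
  have hconj : T * U * Tinv = U * P :=
    units_conj_exp_sum_twistPhase_smul ⟨T, Tinv, hT1, hT2⟩ q hqcomm
      (fun j => (hqherm j).exp_two_pi_I_smul_eq_one (hqint j))
      (fun j => (mul_assoc _ _ _).trans (hTq j))
  have hPψ : P ψ₀ = exp (2 * π * I * ρ) • ψ₀ := by
    refine ContinuousLinearMap.exp_apply_of_apply_eq_smul ?_
    rw [smul_apply, hQψ, smul_smul]
    congr 1
    field_simp [NeZero.ne N]
    push_cast
    ring
  have hTinvT : Tinv (T ψ₀) = ψ₀ := congrArg (· ψ₀) hT2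
  calc T (U ψ₀) = (T * U * Tinv) (T ψ₀) := by simp [hTinvT]
    _ = U (P (z • ψ₀)) := by rw [hconj, hTψ]; rfl
    _ = (z * exp (2 * π * I * ρ)) • U ψ₀ := by rw [map_smul, hPψ, map_smul, map_smul, smul_smul]

/-- Lieb–Schultz–Mattis twist: let `T` be unitary with `T ψ₀ = z ψ₀`, and let
`q j` (sites `j = 1, …, N` indexed by `Fin N` via `j ↦ j+1`) be pairwise commuting
Hermitian operators with integer spectra satisfying `T q_j T⁻¹ = q_{j-1}`
(cyclically), `Q = ∑ q_j` and `Q ψ₀ = N ρ ψ₀`.  Then the twisted state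
`ψ_LSM = (∏_j e^{2πi (j/N) q_j}) ψ₀` satisfies `T ψ_LSM = z e^{2πiρ} ψ_LSM`. -/
theorem lsm_twist_eigenvalue {V : Type*} [NormedAddCommGroup V]
    [InnerProductSpace ℂ V] [FiniteDimensional ℂ V] (N : ℕ) [NeZero N]
    (T Tinv : V →L[ℂ] V) (hT1 : T ∘L Tinv = 1) (hT2 : Tinv ∘L T = 1)
    (q : Fin N → (V →L[ℂ] V))
    (hqherm : ∀ j, IsSelfAdjoint (q j))
    (hqint : ∀ j, spectrum ℂ (q j) ⊆ Set.range ((↑) : ℤ → ℂ))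
    (hqcomm : ∀ j k, Commute (q j) (q k))
    (hTq : ∀ j : Fin N, T ∘L q j ∘L Tinv = q (j - 1))
    (ψ₀ : V) (z : ℂ) (hz : ‖z‖ = 1) (hTψ : T ψ₀ = z • ψ₀)
    (ρ : ℝ) (hQψ : (∑ j, q j) ψ₀ = ((N * ρ : ℝ) : ℂ) • ψ₀) :
    T ((Finset.univ.noncommProd
          (fun j : Fin N =>
            NormedSpace.exp ((2 * Real.pi * Complex.I * ((j.val + 1 : ℕ) : ℂ) / N) • q j))
          (fun j _ k _ _ =>
            (((hqcomm j k).smul_left _).smul_right _).exp)) ψ₀) =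
      (z * Complex.exp (2 * Real.pi * Complex.I * ρ)) •
        ((Finset.univ.noncommProd
          (fun j : Fin N =>
            NormedSpace.exp ((2 * Real.pi * Complex.I * ((j.val + 1 : ℕ) : ℂ) / N) • q j))
          (fun j _ k _ _ =>
            (((hqcomm j k).smul_left _).smul_right _).exp)) ψ₀) :=
  lsm_twist_eigenvalue_general N T Tinv hT1 hT2 q hqherm hqint hqcomm hTq ψ₀ z hTψ ρ hQψ
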